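/- Let Φ be an irreducible root system with fundamental alcove A^∘ and marks c₀ = 1, c₁, …, c_ℓ (coefficients of the highest root, with c₀ = 1) and Coxeter number h = Σ_{i=0}^ℓ c_i. Then the generating function of the Ehrhart quasi-polynomial of the open fundamental alcove with respect to the coweight lattice satisfies Σ_{q ≥ 1} L_{A^∘}(q) t^q = t^h / ∏_{i=0}^ℓ (1 − t^{c_i}). -/

import Mathlib

open scoped RealInnerProductSpace Classical BigOperators

noncomputable section

abbrev V (ℓ : ℕ) := EuclideanSpace ℝ (Fin ℓ)

/-- An irreducible crystallographic (reduced) root system in `ℝ^ℓ`, together with a choice of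
positive system, base of simple roots, highest root with its marks `c i`, and the Weyl group
(generated by the reflections in the roots). -/
structure RootSystemData (ℓ : ℕ) where
  Φ : Set (V ℓ)
  finite : Φ.Finite
  nonzero : (0 : V ℓ) ∉ Φ
  spanning : Submodule.span ℝ Φ = ⊤
  neg_mem : ∀ α ∈ Φ, -α ∈ Φ
  reduced : ∀ α ∈ Φ, ∀ t : ℝ, t • α ∈ Φ → t = 1 ∨ t = -1
  crystallographic : ∀ α ∈ Φ, ∀ β ∈ Φ, ∃ n : ℤ, 2 * ⟪α, β⟫ / ⟪β, β⟫ = (n : ℝ)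
  reflect_mem : ∀ α ∈ Φ, ∀ β ∈ Φ, β - (2 * ⟪β, α⟫ / ⟪α, α⟫) • α ∈ Φ
  irreducible : ¬ ∃ Φ₁ Φ₂ : Set (V ℓ), Φ₁.Nonempty ∧ Φ₂.Nonempty ∧ Φ₁ ∪ Φ₂ = Φ ∧
      ∀ α ∈ Φ₁, ∀ β ∈ Φ₂, ⟪α, β⟫ = 0
  /-- the positive system `Φ⁺` -/
  pos : Set (V ℓ)
  pos_subset : pos ⊆ Φ
  pos_choice : ∀ α ∈ Φ, (α ∈ pos ↔ -α ∉ pos)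
  /-- the simple roots `α₁, …, α_ℓ` -/
  simple : Fin ℓ → V ℓ
  simple_mem : ∀ i, simple i ∈ pos
  simple_indep : LinearIndependent ℝ simple
  pos_comb : ∀ α ∈ pos, ∃ d : Fin ℓ → ℕ, α = ∑ i, (d i : ℝ) • simple i
  /-- the marks `c i` of the highest root -/
  c : Fin ℓ → ℕ
  c_pos : ∀ i, 0 < c i
  /-- the highest root `α̃` -/
  highest : V ℓ
  highest_mem : highest ∈ pos
  highest_eq : highest = ∑ i, (c i : ℝ) • simple i
  highest_max : ∀ α ∈ pos, ∃ d : Fin ℓ → ℕ, highest - α = ∑ i, (d i : ℝ) • simple i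
  /-- the Weyl group `W` -/
  W : Subgroup ((V ℓ) ≃ₗ[ℝ] (V ℓ))
  W_gen : W = Subgroup.closure
      {s : (V ℓ) ≃ₗ[ℝ] (V ℓ) | ∃ α ∈ Φ, ∀ x, s x = x - (2 * ⟪x, α⟫ / ⟪α, α⟫) • α}

namespace RootSystemData

variable {ℓ : ℕ} (R : RootSystemData ℓ)

/-- The extended base `Δ̃ = {α₀, α₁, …, α_ℓ}`, with `none ↦ α₀ = -α̃`. -/
def ext : Option (Fin ℓ) → V ℓ
  | none => -R.highest
  | some i => R.simple i

/-- The extended marks, with `c₀ = 1`. -/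
def cExt : Option (Fin ℓ) → ℕ
  | none => 1
  | some i => R.c i

/-- The Coxeter number `h = c₀ + c₁ + ⋯ + c_ℓ`. -/
def coxh : ℕ := ∑ i : Option (Fin ℓ), R.cExt i

/-- The descent statistic `dsc_Ψ(w) = ∑_{w(α_i) ∈ -Ψᶜ} c_i` (`Ψᶜ = Φ⁺ \ Ψ`). -/
def dsc (Ψ : Set (V ℓ)) (w : (V ℓ) ≃ₗ[ℝ] (V ℓ)) : ℕ :=
  ∑ i : Option (Fin ℓ), if w (R.ext i) ∈ (-(R.pos \ Ψ) : Set (V ℓ)) then R.cExt i else 0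

/-- `dsc̄_Ψ(w) = ∑_{w(α_i) ∈ -Ψ} c_i`. -/
def dscBar (Ψ : Set (V ℓ)) (w : (V ℓ) ≃ₗ[ℝ] (V ℓ)) : ℕ :=
  ∑ i : Option (Fin ℓ), if w (R.ext i) ∈ (-Ψ : Set (V ℓ)) then R.cExt i else 0

/-- `asc_Ψ(w) = ∑_{w(α_i) ∈ Ψᶜ} c_i`. -/
def asc (Ψ : Set (V ℓ)) (w : (V ℓ) ≃ₗ[ℝ] (V ℓ)) : ℕ :=
  ∑ i : Option (Fin ℓ), if w (R.ext i) ∈ R.pos \ Ψ then R.cExt i else 0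

/-- `asc̄_Ψ(w) = ∑_{w(α_i) ∈ Ψ} c_i`. -/
def ascBar (Ψ : Set (V ℓ)) (w : (V ℓ) ≃ₗ[ℝ] (V ℓ)) : ℕ :=
  ∑ i : Option (Fin ℓ), if w (R.ext i) ∈ Ψ then R.cExt i else 0

/-- The affine hyperplane `H_{α,m} = {x : (α,x) = m}`. -/
def Hyp {ℓ' : ℕ} (α : V ℓ') (m : ℤ) : Set (V ℓ') := {x | ⟪α, x⟫ = (m : ℝ)}

/-- The complement of all the affine hyperplanes `H_{α,m}`, `α ∈ Φ⁺`, `m ∈ ℤ`. -/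
def AffC : Set (V ℓ) := {x | ∀ α ∈ R.pos, ∀ m : ℤ, ⟪α, x⟫ ≠ (m : ℝ)}

/-- An alcove is a connected component of the complement of the affine hyperplanes. -/
def IsAlcove (A : Set (V ℓ)) : Prop :=
  ∃ x ∈ R.AffC, A = connectedComponentIn R.AffC x

/-- The half-open fundamental parallelepiped `P^◊ = {x : 0 < (α_i,x) ≤ 1 for all i}`. -/
def Pdia : Set (V ℓ) := {x | ∀ i, 0 < ⟪R.simple i, x⟫ ∧ ⟪R.simple i, x⟫ ≤ 1}

/-- The partial closure `A^◊` of an alcove `A`: the points of the closure lying only on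
walls `H_{α,m}` for which the alcove is on the lower (`<`) side. -/
def pc (A : Set (V ℓ)) : Set (V ℓ) :=
  {x ∈ closure A | ∀ α ∈ R.pos, ∀ m : ℤ, ⟪α, x⟫ = (m : ℝ) → ∀ y ∈ A, ⟪α, y⟫ < (m : ℝ)}

/-- The coweight lattice `Z(Φ^∨)`. -/
def coweightLat : AddSubgroup (V ℓ) where
  carrier := {x | ∀ i, ∃ n : ℤ, ⟪R.simple i, x⟫ = (n : ℝ)}
  add_mem' := by
    intro x y hx hy i
    obtain ⟨n, hn⟩ := hx i
    obtain ⟨m, hm⟩ := hy i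
    exact ⟨n + m, by push_cast; rw [inner_add_right, hn, hm]⟩
  zero_mem' := fun i => ⟨0, by simp⟩
  neg_mem' := by
    intro x hx i
    obtain ⟨n, hn⟩ := hx i
    exact ⟨-n, by push_cast; rw [inner_neg_right, hn]⟩

/-- The coroot lattice `Q(Φ^∨)`, generated by the simple coroots. -/
def corootLat : AddSubgroup (V ℓ) :=
  AddSubgroup.closure {v | ∃ i, v = (2 / ⟪R.simple i, R.simple i⟫) • R.simple i}

/-- The index of connection `f = [Z(Φ^∨) : Q(Φ^∨)]`. -/
def conIndex : ℕ := (R.corootLat.addSubgroupOf R.coweightLat).index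

/-- The open fundamental alcove `A^∘`. -/
def alc : Set (V ℓ) := {x | (∀ i, 0 < ⟪R.simple i, x⟫) ∧ ⟪R.highest, x⟫ < 1}

/-- The closed fundamental alcove `Ā^∘`. -/
def alcC : Set (V ℓ) := {x | (∀ i, 0 ≤ ⟪R.simple i, x⟫) ∧ ⟪R.highest, x⟫ ≤ 1}

/-- The Ehrhart counting function `L_P(q) = #(qP ∩ Z(Φ^∨))` (with value `0` for `q < 0`). -/
def LP (P : Set (V ℓ)) (q : ℤ) : ℕ :=
  if q < 0 then 0 else Set.ncard {x : V ℓ | x ∈ R.coweightLat ∧ ∃ y ∈ P, x = (q : ℝ) • y}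

/-- `S` is a facet of the partially closed alcove `A^◊`. -/
def IsFacetOf (A S : Set (V ℓ)) : Prop :=
  (∃ β ∈ R.pos, ∃ m : ℤ, S = R.pc A ∩ Hyp β m) ∧
    Module.finrank ℝ (vectorSpan ℝ S) = ℓ - 1

/-- `Ψ ⊆ Φ⁺` is compatible with the Worpitzky partition. -/
def Compatible (Ψ : Set (V ℓ)) : Prop :=
  ∀ A : Set (V ℓ), R.IsAlcove A → A ⊆ R.Pdia → ∀ α ∈ Ψ, ∀ m : ℤ,
    (R.pc A ∩ Hyp α m).Nonempty →
      ∃ β ∈ Ψ, ∃ m' : ℤ, R.pc A ∩ Hyp α m ⊆ R.pc A ∩ Hyp β m' ∧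
        R.IsFacetOf A (R.pc A ∩ Hyp β m')

/-- The characteristic quasi-polynomial of `Ψ` w.r.t. the root lattice: the number of points
of `(ℤ/q)^ℓ` avoiding all the subgroups determined by the roots of `Ψ`, whose coordinates in
the basis of simple roots are given by `crd`. -/
def chi (Ψ : Set (V ℓ)) (crd : V ℓ → Fin ℓ → ℕ) (q : ℕ) : ℕ :=
  Nat.card {z : Fin ℓ → ZMod q // ∀ α ∈ Ψ, ∑ i, (crd α i : ZMod q) * z i ≠ 0}

end RootSystemData

/-!
A point of `q A^∘ ∩ Z(Φ^∨)` is determined by its coordinates `aᵢ = (αᵢ, x)`, which are positive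
integers with `∑ cᵢ aᵢ < q`. Adding the slack `a₀ = q - ∑ cᵢ aᵢ ≥ 1` (with `c₀ = 1`), `L_{A^∘}(q)`
counts the solutions of `∑_{i=0}^ℓ cᵢ aᵢ = q` in positive integers, whose generating function is
`∏ᵢ tᶜⁱ / (1 - tᶜⁱ)`.
-/

open PowerSeries

def posMultiplesSeries (c : ℕ) : PowerSeries ℤ :=
  mk fun n => if 0 < n ∧ c ∣ n then 1 else 0

lemma posMultiplesSeries_mul_one_sub_X_pow {c : ℕ} (hc : 0 < c) :
    posMultiplesSeries c * (1 - X ^ c) = X ^ c := by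
  ext n
  rw [mul_sub, mul_one, mul_comm, map_sub, coeff_X_pow_mul', coeff_X_pow, posMultiplesSeries,
    coeff_mk]
  rcases lt_trichotomy n c with hlt | rfl | hgt
  · have : ¬ (0 < n ∧ c ∣ n) := fun h => absurd (Nat.le_of_dvd h.1 h.2) hlt.not_ge
    simp [hlt.ne, hlt.not_ge, this]
  · simp [hc]
  · rw [if_pos hgt.le, coeff_mk]
    simp only [Nat.dvd_sub_self_right]
    split_ifs <;> omega

lemma coeff_prod_posMultiplesSeries {ι : Type*} [Fintype ι] {c : ι → ℕ} (hc : ∀ i, 0 < c i)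
    (n : ℕ) : coeff n (∏ i, posMultiplesSeries (c i)) =
      {a : ι → ℕ | (∀ i, 0 < a i) ∧ ∑ i, c i * a i = n}.ncard := by
  classical
  have hterm (l : ι →₀ ℕ) : ∏ i, coeff (l i) (posMultiplesSeries (c i)) =
      if ∀ i, 0 < l i ∧ c i ∣ l i then 1 else 0 := by
    simp only [posMultiplesSeries, coeff_mk]
    exact Fintype.prod_boole
  rw [coeff_prod, Finset.sum_congr rfl fun l _ => hterm l, Finset.sum_boole, Nat.cast_inj,
    ← Set.ncard_coe_finset]
  -- a composition `n = ∑ lᵢ` into positive multiples `lᵢ = cᵢ aᵢ` corresponds to `a`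
  refine Set.ncard_congr (fun (l : ι →₀ ℕ) _ i => l i / c i) ?_ ?_ ?_
  · simp only [Finset.coe_filter, Finset.mem_finsuppAntidiag, Set.mem_ofPred_eq]
    rintro l ⟨⟨hsum, -⟩, hl⟩
    refine ⟨fun i => Nat.div_pos (Nat.le_of_dvd (hl i).1 (hl i).2) (hc i), ?_⟩
    simpa only [Nat.mul_div_cancel' (hl _).2] using hsum
  · simp only [Finset.coe_filter, Set.mem_ofPred_eq]
    intro l l' hl hl' h
    ext i
    rw [← Nat.mul_div_cancel' (hl.2 i).2, ← Nat.mul_div_cancel' (hl'.2 i).2, congrFun h i]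
  · rintro a ⟨hpos, hsum⟩
    refine ⟨Finsupp.equivFunOnFinite.symm fun i => c i * a i, ?_, ?_⟩
    · simp only [Finset.coe_filter, Finset.mem_finsuppAntidiag, Set.mem_ofPred_eq]
      exact ⟨⟨hsum, Finset.subset_univ _⟩,
        fun i => ⟨Nat.mul_pos (hc i) (hpos i), dvd_mul_right _ _⟩⟩
    · funext i
      exact Nat.mul_div_cancel_left _ (hc i)

lemma ncard_option_sum_eq_ncard_sum_lt {ι : Type*} [Fintype ι] {d : Option ι → ℕ}
    (hd : d none = 1) (q : ℕ) :
    {a : Option ι → ℕ | (∀ i, 0 < a i) ∧ ∑ i, d i * a i = q}.ncard =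
      {b : ι → ℕ | (∀ i, 0 < b i) ∧ ∑ i, d (some i) * b i < q}.ncard := by
  have hsum (a : Option ι → ℕ) : ∑ i, d i * a i = a none + ∑ i, d (some i) * a (some i) := by
    rw [Fintype.sum_option, hd, one_mul]
  -- forget the slack coordinate `a none = q - ∑ dᵢ bᵢ`
  refine Set.ncard_congr (fun a _ => a ∘ some) ?_ ?_ ?_
  · rintro a ⟨hpos, hq⟩
    rw [hsum] at hq
    exact ⟨fun i => hpos (some i), by have := hpos none; simp only [Function.comp_apply]; omega⟩
  · rintro a a' ⟨-, hq⟩ ⟨-, hq'⟩ h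
    have hsome (i : ι) : a (some i) = a' (some i) := congrFun h i
    rw [hsum] at hq hq'
    simp only [hsome] at hq
    funext o
    cases o with
    | none => omega
    | some i => exact hsome i
  · rintro b ⟨hpos, hlt⟩
    refine ⟨fun o => o.elim (q - ∑ i, d (some i) * b i) b, ⟨?_, ?_⟩, rfl⟩
    · exact Option.forall.mpr ⟨by simp only [Option.elim]; omega, hpos⟩
    · rw [hsum]
      simp only [Option.elim]
      omega

section Coordinates

variable {E ι : Type*} [NormedAddCommGroup E] [InnerProductSpace ℝ E] [FiniteDimensional ℝ E]
  [Fintype ι]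

lemma bijective_pi_innerₛₗ {v : ι → E} (hv : LinearIndependent ℝ v)
    (hcard : Fintype.card ι = Module.finrank ℝ E) :
    Function.Bijective (LinearMap.pi fun i => innerₛₗ ℝ (v i)) := by
  have hinj : Function.Injective (LinearMap.pi fun i => innerₛₗ ℝ (v i)) := fun x y h =>
    InnerProductSpace.ext_inner_left_basis (basisOfLinearIndependentOfCardEqFinrank' v hv hcard)
      fun i => by simpa using congrFun h i
  exact ⟨hinj, (LinearMap.injective_iff_surjective_of_finrank_eq_finrank (by simp [hcard])).mp hinj⟩

end Coordinates

namespace RootSystemData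

variable {ℓ : ℕ} (R : RootSystemData ℓ)

lemma cExt_pos (i : Option (Fin ℓ)) : 0 < R.cExt i := by
  cases i with
  | none => exact Nat.one_pos
  | some i => exact R.c_pos i

def simpleCoords : V ℓ ≃ₗ[ℝ] (Fin ℓ → ℝ) :=
  LinearEquiv.ofBijective _ (bijective_pi_innerₛₗ R.simple_indep (by simp))

@[simp]
lemma simpleCoords_apply (x : V ℓ) (i : Fin ℓ) : R.simpleCoords x i = ⟪R.simple i, x⟫ := rfl

lemma inner_highest_eq_of_simpleCoords {x : V ℓ} {a : Fin ℓ → ℕ}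
    (ha : R.simpleCoords x = fun i => (a i : ℝ)) :
    ⟪R.highest, x⟫ = ((∑ i, R.c i * a i : ℕ) : ℝ) := by
  have hcoord (i : Fin ℓ) : ⟪R.simple i, x⟫ = a i := congrFun ha i
  simp [R.highest_eq, sum_inner, real_inner_smul_left, hcoord]

lemma mem_smul_alc_iff {t : ℝ} (ht : 0 < t) (x : V ℓ) :
    (∃ y ∈ R.alc, x = t • y) ↔ (∀ i, 0 < ⟪R.simple i, x⟫) ∧ ⟪R.highest, x⟫ < t := by
  constructor
  · rintro ⟨y, ⟨hpos, hlt⟩, rfl⟩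
    simp only [real_inner_smul_right]
    exact ⟨fun i => mul_pos ht (hpos i), by nlinarith⟩
  · rintro ⟨hpos, hlt⟩
    refine ⟨t⁻¹ • x, ⟨fun i => ?_, ?_⟩, (smul_inv_smul₀ ht.ne' x).symm⟩
    · rw [real_inner_smul_right]
      exact mul_pos (inv_pos.mpr ht) (hpos i)
    · rwa [real_inner_smul_right, inv_mul_lt_iff₀ ht, mul_one]

lemma mem_coweightLat_and_pos_iff (x : V ℓ) :
    (x ∈ R.coweightLat ∧ ∀ i, 0 < ⟪R.simple i, x⟫) ↔
      ∃ a : Fin ℓ → ℕ, (∀ i, 0 < a i) ∧ R.simpleCoords x = fun i => (a i : ℝ) := by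
  constructor
  · rintro ⟨hlat, hpos⟩
    choose m hm using hlat
    have hm_pos (i : Fin ℓ) : 0 < m i := by exact_mod_cast hm i ▸ hpos i
    refine ⟨fun i => (m i).toNat, fun i => by simpa using hm_pos i, funext fun i => ?_⟩
    rw [simpleCoords_apply, hm i]
    exact_mod_cast (Int.toNat_of_nonneg (hm_pos i).le).symm
  · rintro ⟨a, hpos, ha⟩
    have hcoord (i : Fin ℓ) : ⟪R.simple i, x⟫ = a i := congrFun ha i
    exact ⟨fun i => ⟨a i, by simp [hcoord]⟩, fun i => by simp [hcoord, hpos i]⟩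

lemma coweightLat_inter_smul_alc_eq_image {q : ℕ} (hq : 0 < q) :
    {x : V ℓ | x ∈ R.coweightLat ∧ ∃ y ∈ R.alc, x = ((q : ℤ) : ℝ) • y} =
      (fun a : Fin ℓ → ℕ => R.simpleCoords.symm fun i => (a i : ℝ)) ''
        {a | (∀ i, 0 < a i) ∧ ∑ i, R.c i * a i < q} := by
  ext x
  simp only [Set.mem_ofPred_eq, Set.mem_image, Int.cast_natCast,
    R.mem_smul_alc_iff (Nat.cast_pos.mpr hq), ← and_assoc, mem_coweightLat_and_pos_iff,
    LinearEquiv.symm_apply_eq]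
  constructor
  · rintro ⟨⟨a, hpos, ha⟩, hlt⟩
    rw [R.inner_highest_eq_of_simpleCoords ha, Nat.cast_lt] at hlt
    exact ⟨a, ⟨hpos, hlt⟩, ha.symm⟩
  · rintro ⟨a, ⟨hpos, hlt⟩, ha⟩
    refine ⟨⟨a, hpos, ha.symm⟩, ?_⟩
    rwa [R.inner_highest_eq_of_simpleCoords ha.symm, Nat.cast_lt]

lemma LP_alc_eq_ncard {q : ℕ} (hq : 0 < q) :
    R.LP R.alc q = {a : Fin ℓ → ℕ | (∀ i, 0 < a i) ∧ ∑ i, R.c i * a i < q}.ncard := by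
  rw [LP, if_neg (by omega), R.coweightLat_inter_smul_alc_eq_image hq]
  exact Set.ncard_image_of_injective _
    (R.simpleCoords.symm.injective.comp Nat.cast_injective.comp_left)

end RootSystemData

/-- `∑_{q ≥ 1} L_{A^∘}(q) t^q = t^h / ∏_{i=0}^ℓ (1 - t^{c_i})`. -/
theorem ehrhart_series_open_alcove {ℓ : ℕ} (R : RootSystemData ℓ) :
    (PowerSeries.mk fun n : ℕ => if n = 0 then 0 else (R.LP R.alc (n : ℤ) : ℤ)) *
        ∏ i : Option (Fin ℓ), (1 - PowerSeries.X ^ R.cExt i) =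
      (PowerSeries.X : PowerSeries ℤ) ^ R.coxh := by
  have hseries : (mk fun n : ℕ => if n = 0 then 0 else (R.LP R.alc n : ℤ)) =
      ∏ i, posMultiplesSeries (R.cExt i) := by
    ext (_ | q)
    · simp [coeff_zero_eq_constantCoeff_apply, posMultiplesSeries]
    · rw [coeff_mk, if_neg q.succ_ne_zero, coeff_prod_posMultiplesSeries R.cExt_pos,
        ncard_option_sum_eq_ncard_sum_lt rfl, R.LP_alc_eq_ncard q.succ_pos]
      rfl
  rw [hseries, ← Finset.prod_mul_distrib, RootSystemData.coxh, ← Finset.prod_pow_eq_pow_sum]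
  exact Finset.prod_congr rfl fun i _ => posMultiplesSeries_mul_one_sub_X_pow (R.cExt_pos i)
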